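/- arXiv:1211.0089 — 4 statements merged into one kernel-verified Lean document; each statement's English description precedes it below -/
import Mathlib

section
/- For all a, b > 0 with a ≠ b, G(a,b)^(1/3) · Q(a,b)^(2/3) < M(a,b), and the exponent 1/3 is the least value α such that G^α Q^(1-α) < M holds for all a ≠ b. -/
noncomputable def M (a b : ℝ) : ℝ := (a - b) / (2 * Real.arsinh ((a - b) / (a + b)))
noncomputable def G (a b : ℝ) : ℝ := Real.sqrt (a * b)
noncomputable def Q (a b : ℝ) : ℝ := Real.sqrt ((a ^ 2 + b ^ 2) / 2)

/-!
With `s = (a + b) / 2` and `t = (a - b) / (a + b) ∈ (-1, 1)` one has `G = s √(1 - t²)`,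
`Q = s √(1 + t²)` and `M = s t / arsinh t`, so the inequality says
`(1 - t²)^(1/6) (1 + t²)^(1/3) arsinh t < t`. For `0 < t < 1` this follows by comparing the
derivatives of `arsinh t` and of `t (1 - t²)^(-1/6) (1 + t²)^(-1/3)`; after raising to the sixth
power that comparison is the polynomial inequality `(1 - x)^7 (1 + x)^5 < (1 - x/3)^6`, `x = t²`.

As `G ≤ Q`, the mean `G^α Q^(1-α)` decreases in `α`. For `α < 1/3`, `G^α Q^(1-α) / M` is
`1 + (1/3 - α) t² + O(t⁴)`; taking `t² = 1/3 - α`, the bounds `arsinh t ≥ t - t³/6` and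
`log y ≥ 1 - 1/y` show `G^α Q^(1-α) ≥ M` there.
-/

open Real

theorem sub_pow_seven_mul_add_pow_five_lt {x : ℝ} (hx₀ : 0 < x) (hx₁ : x < 1) :
    (1 - x) ^ 7 * (1 + x) ^ 5 < (1 - x / 3) ^ 6 := by
  have hy : 0 < 1 - x := by linarith
  -- the difference of the two sides, divided by `x ^ 2 / 729`, written in the Bernstein basis
  have hB : 0 < 4131 * (1 - x) ^ 10 + 33480 * x * (1 - x) ^ 9 + 111915 * x ^ 2 * (1 - x) ^ 8
      + 200322 * x ^ 3 * (1 - x) ^ 7 + 213445 * x ^ 4 * (1 - x) ^ 6 + 149100 * x ^ 5 * (1 - x) ^ 5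
      + 75660 * x ^ 6 * (1 - x) ^ 4 + 27200 * x ^ 7 * (1 - x) ^ 3 + 6576 * x ^ 8 * (1 - x) ^ 2
      + 960 * x ^ 9 * (1 - x) + 64 * x ^ 10 := by positivity
  linear_combination (1 / 729 : ℝ) * mul_pos (pow_pos hx₀ 2) hB

/-- `G ^ (1/3) * Q ^ (2/3)` at `a = 1 + u`, `b = 1 - u`. -/
noncomputable def meanWeight (u : ℝ) : ℝ := (1 - u ^ 2) ^ (1 / 6 : ℝ) * (1 + u ^ 2) ^ (1 / 3 : ℝ)

theorem meanWeight_pos {u : ℝ} (hu : u ^ 2 < 1) : 0 < meanWeight u := by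
  have : 0 < 1 - u ^ 2 := by linarith
  unfold meanWeight; positivity

theorem meanWeight_pow_six {u : ℝ} (hu : u ^ 2 ≤ 1) :
    meanWeight u ^ 6 = (1 - u ^ 2) * (1 + u ^ 2) ^ 2 := by
  have hp : 0 ≤ 1 - u ^ 2 := by linarith
  rw [meanWeight, mul_pow, ← rpow_mul_natCast hp, ← rpow_mul_natCast (by positivity)]
  norm_num

theorem hasDerivAt_div_meanWeight {u : ℝ} (hu : u ^ 2 < 1) :
    HasDerivAt (fun v => v / meanWeight v)
      ((1 - u ^ 2 / 3) / ((1 - u ^ 2) * (1 + u ^ 2) * meanWeight u)) u := by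
  have hp : 1 - u ^ 2 ≠ 0 := by nlinarith
  have hq : 1 + u ^ 2 ≠ 0 := by positivity
  have hP := (((hasDerivAt_pow 2 u).const_sub 1).rpow_const (p := 1 / 6) (.inl hp))
  have hQ := (((hasDerivAt_pow 2 u).const_add 1).rpow_const (p := 1 / 3) (.inl hq))
  refine ((hasDerivAt_id' u).div (hP.mul hQ) (meanWeight_pos hu).ne').congr_deriv ?_
  rw [rpow_sub_one hp, rpow_sub_one hq]
  simp only [meanWeight, Pi.mul_apply]
  have hA : 0 < (1 - u ^ 2) ^ (1 / 6 : ℝ) := rpow_pos_of_pos (by nlinarith) _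
  have hB : 0 < (1 + u ^ 2) ^ (1 / 3 : ℝ) := rpow_pos_of_pos (by positivity) _
  field_simp
  ring

theorem inv_sqrt_lt_deriv_div_meanWeight {u : ℝ} (hu₀ : 0 < u) (hu₁ : u < 1) :
    (√(1 + u ^ 2))⁻¹ < (1 - u ^ 2 / 3) / ((1 - u ^ 2) * (1 + u ^ 2) * meanWeight u) := by
  have hx₀ : 0 < u ^ 2 := by positivity
  have hx₁ : u ^ 2 < 1 := by nlinarith
  have hp : 0 < 1 - u ^ 2 := by linarith
  have hw := meanWeight_pos hx₁
  rw [inv_eq_one_div, div_lt_div_iff₀ (by positivity) (by positivity [mul_pos hp hw]), one_mul]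
  refine lt_of_pow_lt_pow_left₀ 6 (mul_nonneg (by linarith) (sqrt_nonneg _)) ?_
  rw [mul_pow, mul_pow, meanWeight_pow_six hx₁.le, mul_pow,
    show √(1 + u ^ 2) ^ 6 = (1 + u ^ 2) ^ 3 by
      rw [show 6 = 2 * 3 from rfl, pow_mul, sq_sqrt (by positivity)]]
  have key := sub_pow_seven_mul_add_pow_five_lt hx₀ hx₁
  calc ((1 - u ^ 2) ^ 6 * (1 + u ^ 2) ^ 6 * ((1 - u ^ 2) * (1 + u ^ 2) ^ 2))
      = (1 - u ^ 2) ^ 7 * (1 + u ^ 2) ^ 5 * (1 + u ^ 2) ^ 3 := by ring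
    _ < (1 - u ^ 2 / 3) ^ 6 * (1 + u ^ 2) ^ 3 := by gcongr

theorem arsinh_lt_div_meanWeight {u : ℝ} (hu₀ : 0 < u) (hu₁ : u < 1) :
    arsinh u < u / meanWeight u := by
  have hderiv : ∀ v ∈ Set.Ico (0 : ℝ) 1, HasDerivAt (fun v => v / meanWeight v - arsinh v)
      ((1 - v ^ 2 / 3) / ((1 - v ^ 2) * (1 + v ^ 2) * meanWeight v) - (√(1 + v ^ 2))⁻¹) v :=
    fun v hv => (hasDerivAt_div_meanWeight (by nlinarith [hv.1, hv.2])).sub (hasDerivAt_arsinh v)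
  have hmono : StrictMonoOn (fun v => v / meanWeight v - arsinh v) (Set.Ico 0 1) := by
    refine strictMonoOn_of_deriv_pos (convex_Ico 0 1)
      (fun v hv => (hderiv v hv).continuousAt.continuousWithinAt) fun v hv => ?_
    rw [interior_Ico] at hv
    rw [(hderiv v (Set.Ioo_subset_Ico_self hv)).deriv, sub_pos]
    exact inv_sqrt_lt_deriv_div_meanWeight hv.1 hv.2
  simpa using hmono ⟨le_rfl, one_pos⟩ ⟨hu₀.le, hu₁⟩ hu₀

theorem meanWeight_lt_div_arsinh {t : ℝ} (ht₀ : t ≠ 0) (ht₁ : |t| < 1) :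
    meanWeight t < t / arsinh t := by
  have key {u : ℝ} (hu₀ : 0 < u) (hu₁ : u < 1) : meanWeight u < u / arsinh u := by
    have := arsinh_lt_div_meanWeight hu₀ hu₁
    rwa [lt_div_iff₀ (meanWeight_pos (by nlinarith)), mul_comm,
      ← lt_div_iff₀ (arsinh_pos_iff.2 hu₀)] at this
  rcases ht₀.lt_or_gt with ht | ht
  · have := key (neg_pos.2 ht) (by rwa [abs_of_neg ht] at ht₁)
    rwa [meanWeight, neg_sq, arsinh_neg, neg_div_neg_eq] at this
  · exact key ht (by rwa [abs_of_pos ht] at ht₁)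

theorem one_sub_sq_div_two_le_inv_sqrt (x : ℝ) : 1 - x ^ 2 / 2 ≤ (√(1 + x ^ 2))⁻¹ := by
  rcases le_or_gt (1 - x ^ 2 / 2) 0 with h | h
  · exact h.trans (by positivity)
  have hs : 0 < √(1 + x ^ 2) := by positivity
  rw [← one_div, le_div_iff₀ hs, ← pow_le_one_iff_of_nonneg (by positivity) two_ne_zero,
    mul_pow, sq_sqrt (by positivity)]
  nlinarith [pow_nonneg (sq_nonneg x) 2]

theorem sub_pow_three_div_six_le_arsinh {t : ℝ} (ht : 0 ≤ t) : t - t ^ 3 / 6 ≤ arsinh t := by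
  have hderiv (x : ℝ) : HasDerivAt (fun v => arsinh v - (v - v ^ 3 / 6))
      ((√(1 + x ^ 2))⁻¹ - (1 - x ^ 2 / 2)) x := by
    refine (hasDerivAt_arsinh x).sub (((hasDerivAt_id' x).sub
      ((hasDerivAt_pow 3 x).div_const 6)).congr_deriv ?_)
    push_cast; ring
  have hmono : MonotoneOn (fun v => arsinh v - (v - v ^ 3 / 6)) (Set.Ici 0) :=
    monotoneOn_of_deriv_nonneg (convex_Ici 0)
      (fun x _ => (hderiv x).continuousAt.continuousWithinAt)
      (fun x _ => (hderiv x).differentiableAt.differentiableWithinAt)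
      fun x _ => by rw [(hderiv x).deriv, sub_nonneg]; exact one_sub_sq_div_two_le_inv_sqrt x
  simpa using hmono Set.self_mem_Ici ht ht

theorem one_le_mul_sqrt_rpow_mul_sqrt_rpow {x β : ℝ} (hx : 0 < x) (hβ : 0 ≤ β)
    (hxβ : β + x = 1 / 3) : 1 ≤ (1 - x / 6) * (√(1 - x) ^ β * √(1 + x) ^ (1 - β)) := by
  have h₁ : 0 < 1 - x / 6 := by linarith
  have h₂ : 0 < 1 - x := by linarith
  have h₃ : 0 < 1 + x := by linarith
  rw [← log_nonneg_iff (by positivity), log_mul h₁.ne' (by positivity),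
    log_mul (by positivity) (by positivity), log_rpow (sqrt_pos.2 h₂), log_rpow (sqrt_pos.2 h₃),
    log_sqrt h₂.le, log_sqrt h₃.le]
  have l₁ := one_sub_inv_le_log_of_pos h₁
  have l₂ := mul_le_mul_of_nonneg_left (one_sub_inv_le_log_of_pos h₂) hβ
  have l₃ := mul_le_mul_of_nonneg_left (one_sub_inv_le_log_of_pos h₃) (by linarith : 0 ≤ 1 - β)
  have h₄ : 0 < 6 - x := by linarith
  have hsum : (1 - (1 - x / 6)⁻¹) + β * (1 - (1 - x)⁻¹) / 2 + (1 - β) * (1 - (1 + x)⁻¹) / 2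
      = x ^ 2 * (17 / 3 + x) / (2 * (1 - x) * (1 + x) * (6 - x)) := by
    rw [show β = 1 / 3 - x by linarith]
    field_simp
    ring
  have : 0 ≤ x ^ 2 * (17 / 3 + x) / (2 * (1 - x) * (1 + x) * (6 - x)) := by positivity
  linarith

theorem G_eq {a b : ℝ} (ha : 0 < a) (hb : 0 < b) :
    G a b = (a + b) / 2 * √(1 - ((a - b) / (a + b)) ^ 2) := by
  have hs : a + b ≠ 0 := by positivity
  rw [G, ← sqrt_sq (by positivity : 0 ≤ (a + b) / 2), ← sqrt_mul (by positivity)]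
  congr 1
  field_simp
  ring

theorem Q_eq {a b : ℝ} (ha : 0 < a) (hb : 0 < b) :
    Q a b = (a + b) / 2 * √(1 + ((a - b) / (a + b)) ^ 2) := by
  have hs : a + b ≠ 0 := by positivity
  rw [Q, ← sqrt_sq (by positivity : 0 ≤ (a + b) / 2), ← sqrt_mul (by positivity)]
  congr 1
  field_simp
  ring

theorem M_eq {a b : ℝ} (hs : a + b ≠ 0) :
    M a b = (a + b) / 2 * ((a - b) / (a + b) / arsinh ((a - b) / (a + b))) := by
  rw [M]
  field_simp

theorem G_rpow_mul_Q_rpow_eq {a b : ℝ} (ha : 0 < a) (hb : 0 < b) :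
    G a b ^ (1 / 3 : ℝ) * Q a b ^ (2 / 3 : ℝ) = (a + b) / 2 * meanWeight ((a - b) / (a + b)) := by
  have ht : ((a - b) / (a + b)) ^ 2 ≤ 1 := by
    rw [div_pow, div_le_one (by positivity)]; nlinarith
  have hs : 0 ≤ (a + b) / 2 := by positivity
  rw [G_eq ha hb, Q_eq ha hb, mul_rpow hs (sqrt_nonneg _), mul_rpow hs (sqrt_nonneg _),
    mul_mul_mul_comm, ← rpow_add' hs (by norm_num), sqrt_eq_rpow, sqrt_eq_rpow,
    ← rpow_mul (by linarith), ← rpow_mul (by positivity), meanWeight]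
  norm_num

theorem G_rpow_mul_Q_rpow_lt_M {a b : ℝ} (ha : 0 < a) (hb : 0 < b) (hab : a ≠ b) :
    G a b ^ (1 / 3 : ℝ) * Q a b ^ (2 / 3 : ℝ) < M a b := by
  have hs : 0 < a + b := by positivity
  have ht₀ : (a - b) / (a + b) ≠ 0 := div_ne_zero (sub_ne_zero.2 hab) hs.ne'
  have ht₁ : |(a - b) / (a + b)| < 1 := by
    rw [abs_div, abs_of_pos hs, div_lt_one hs, abs_sub_lt_iff]; constructor <;> linarith
  rw [G_rpow_mul_Q_rpow_eq ha hb, M_eq hs.ne']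
  exact mul_lt_mul_of_pos_left (meanWeight_lt_div_arsinh ht₀ ht₁) (by positivity)

theorem rpow_mul_rpow_one_sub_le_of_le {g q α β : ℝ} (hg : 0 < g) (hgq : g ≤ q) (hαβ : α ≤ β) :
    g ^ β * q ^ (1 - β) ≤ g ^ α * q ^ (1 - α) := by
  have hq := hg.trans_le hgq
  have key (γ : ℝ) : g ^ γ * q ^ (1 - γ) = q * (g / q) ^ γ := by
    rw [div_rpow hg.le hq.le, rpow_sub hq, rpow_one]; field_simp
  rw [key, key]
  exact mul_le_mul_of_nonneg_left
    (rpow_le_rpow_of_exponent_ge (div_pos hg hq) ((div_le_one hq).2 hgq) hαβ) hq.le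

theorem G_pos {a b : ℝ} (ha : 0 < a) (hb : 0 < b) : 0 < G a b := by
  rw [G]; positivity

theorem G_le_Q (a b : ℝ) : G a b ≤ Q a b :=
  sqrt_le_sqrt (by nlinarith [sq_nonneg (a - b)])

theorem exists_M_le_G_rpow_mul_Q_rpow {β : ℝ} (hβ₀ : 0 ≤ β) (hβ : β < 1 / 3) :
    ∃ a b, 0 < a ∧ 0 < b ∧ a ≠ b ∧ M a b ≤ G a b ^ β * Q a b ^ (1 - β) := by
  obtain ⟨x, hx⟩ : ∃ x, β + x = 1 / 3 := ⟨1 / 3 - β, by ring⟩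
  have hx₀ : 0 < x := by linarith
  set t := √x
  have ht₀ : 0 < t := sqrt_pos.2 hx₀
  have ht₂ : t ^ 2 = x := sq_sqrt hx₀.le
  have ht₁ : t < 1 := by nlinarith
  refine ⟨1 + t, 1 - t, by linarith, by linarith, by linarith, ?_⟩
  have hG : G (1 + t) (1 - t) = √(1 - x) := by rw [G, ← ht₂]; ring_nf
  have hQ : Q (1 + t) (1 - t) = √(1 + x) := by rw [Q, ← ht₂]; ring_nf
  have hM : M (1 + t) (1 - t) = t / arsinh t := by rw [M]; ring_nf
  have hP := one_le_mul_sqrt_rpow_mul_sqrt_rpow hx₀ hβ₀ hx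
  have hA : t * (1 - x / 6) ≤ arsinh t := by
    rw [← ht₂]; linarith [sub_pow_three_div_six_le_arsinh ht₀.le]
  rw [hG, hQ, hM, div_le_iff₀ (arsinh_pos_iff.2 ht₀)]
  calc t ≤ t * ((1 - x / 6) * (√(1 - x) ^ β * √(1 + x) ^ (1 - β))) :=
        le_mul_of_one_le_right ht₀.le hP
    _ = √(1 - x) ^ β * √(1 + x) ^ (1 - β) * (t * (1 - x / 6)) := by ring
    _ ≤ √(1 - x) ^ β * √(1 + x) ^ (1 - β) * arsinh t := by gcongr

theorem stmt2 :
    (∀ a b : ℝ, 0 < a → 0 < b → a ≠ b →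
      G a b ^ ((1 : ℝ) / 3) * Q a b ^ ((2 : ℝ) / 3) < M a b) ∧
    (∀ α : ℝ, (∀ a b : ℝ, 0 < a → 0 < b → a ≠ b →
      G a b ^ α * Q a b ^ (1 - α) < M a b) ↔ 1 / 3 ≤ α) := by
  refine ⟨fun a b => G_rpow_mul_Q_rpow_lt_M, fun α => ⟨fun h => ?_, fun hα a b ha hb hab => ?_⟩⟩
  · by_contra! hα
    obtain ⟨a, b, ha, hb, hab, hM⟩ :=
      exists_M_le_G_rpow_mul_Q_rpow (le_max_right α 0) (max_lt hα (by norm_num))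
    have := rpow_mul_rpow_one_sub_le_of_le (G_pos ha hb) (G_le_Q a b) (le_max_left α 0)
    linarith [h a b ha hb hab]
  · calc G a b ^ α * Q a b ^ (1 - α) ≤ G a b ^ (1 / 3 : ℝ) * Q a b ^ (1 - 1 / 3 : ℝ) :=
          rpow_mul_rpow_one_sub_le_of_le (G_pos ha hb) (G_le_Q a b) hα
      _ = G a b ^ (1 / 3 : ℝ) * Q a b ^ (2 / 3 : ℝ) := by norm_num
      _ < M a b := G_rpow_mul_Q_rpow_lt_M ha hb hab
end

section
/- For all x ∈ (0,1), log(1+x²) - log(x/arsinh(x)) + (5/9)·[(1/2)·log(1-x²) - log(1+x²)] < 0. -/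
/-!
Write `G y = log (y / arsinh y) - 4/9 log (1 + y²) - 5/18 log (1 - y²)`; the claim is `G x > 0`.
Replacing `arsinh y / y` by its continuous extension (value `1` at `0`) makes `G` continuous on
`[0, 1)` with `G 0 = 0`, so it suffices that `G' > 0` on `(0, 1)`. With `P = arsinh y * √(1 + y²)`,
clearing denominators turns `G' y > 0` into `P (9 - 3y² + 4y⁴) > 9y (1 - y⁴)`, which follows from
`P ≥ y + y³/3 - y⁵/4`, itself a product of the bounds `arsinh y ≥ y - y³/6` and
`√(1 + y²) ≥ 1 + y²/2 - y⁴/8`.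
-/

open Real Set Filter Topology

namespace Real

theorem sub_cube_div_six_le_arsinh {x : ℝ} (hx : 0 ≤ x) : x - x ^ 3 / 6 ≤ arsinh x := by
  have hderiv (y : ℝ) : HasDerivAt (fun z => arsinh z - (z - z ^ 3 / 6))
      ((√(1 + y ^ 2))⁻¹ - (1 - y ^ 2 / 2)) y := by
    refine ((hasDerivAt_arsinh y).sub ((hasDerivAt_id' y).sub
      ((hasDerivAt_pow 3 y).div_const 6))).congr_deriv ?_
    push_cast
    ring
  have hmono : Monotone fun z => arsinh z - (z - z ^ 3 / 6) := by
    refine monotone_of_deriv_nonneg (fun y => (hderiv y).differentiableAt) fun y => ?_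
    have hs : 0 < √(1 + y ^ 2) := sqrt_pos.2 (by positivity)
    have hs_sq : √(1 + y ^ 2) ^ 2 = 1 + y ^ 2 := sq_sqrt (by positivity)
    have hs_le : √(1 + y ^ 2) ≤ 1 + y ^ 2 / 2 := by nlinarith
    rw [(hderiv y).deriv, sub_nonneg, ← one_div, le_div_iff₀ hs]
    nlinarith [sq_nonneg y]
  simpa using hmono hx

theorem one_add_sq_div_two_sub_le_sqrt (y : ℝ) : 1 + y ^ 2 / 2 - y ^ 4 / 8 ≤ √(1 + y ^ 2) := by
  rcases le_or_gt (1 + y ^ 2 / 2 - y ^ 4 / 8) 0 with h | h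
  · exact h.trans (sqrt_nonneg _)
  · exact le_sqrt_of_sq_le (by nlinarith [sq_nonneg y, pow_nonneg (sq_nonneg y) 3])

theorem add_cube_div_three_sub_le_arsinh_mul_sqrt {y : ℝ} (h0 : 0 ≤ y) (h1 : y ≤ 1) :
    y + y ^ 3 / 3 - y ^ 5 / 4 ≤ arsinh y * √(1 + y ^ 2) := by
  have hy2 : y ^ 2 ≤ 1 := pow_le_one₀ h0 h1
  calc y + y ^ 3 / 3 - y ^ 5 / 4
      ≤ (y - y ^ 3 / 6) * (1 + y ^ 2 / 2 - y ^ 4 / 8) := by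
        nlinarith [pow_nonneg h0 5, pow_nonneg h0 7]
    _ ≤ arsinh y * √(1 + y ^ 2) :=
        mul_le_mul (sub_cube_div_six_le_arsinh h0) (one_add_sq_div_two_sub_le_sqrt y)
          (by nlinarith) (arsinh_nonneg_iff.2 h0)

theorem dslope_arsinh_zero_pos (y : ℝ) : 0 < dslope arsinh 0 y := by
  rcases lt_trichotomy y 0 with hy | rfl | hy
  · rw [dslope_of_ne _ hy.ne, slope_def_field, arsinh_zero, sub_zero, sub_zero]
    exact div_pos_of_neg_of_neg (arsinh_neg_iff.2 hy) hy
  · simp [dslope_same, (hasDerivAt_arsinh 0).deriv]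
  · rw [dslope_of_ne _ hy.ne', slope_def_field, arsinh_zero, sub_zero, sub_zero]
    exact div_pos (arsinh_pos_iff.2 hy) hy

end Real

noncomputable def arsinhGap (y : ℝ) : ℝ :=
  -log (dslope arsinh 0 y) - 4 / 9 * log (1 + y ^ 2) - 5 / 18 * log (1 - y ^ 2)

noncomputable def arsinhGapDeriv (y : ℝ) : ℝ :=
  y⁻¹ - (arsinh y * √(1 + y ^ 2))⁻¹ + y * (13 * y ^ 2 - 3) / (9 * (1 - y ^ 4))

theorem arsinhGap_zero : arsinhGap 0 = 0 := by
  simp [arsinhGap, dslope_same, (hasDerivAt_arsinh 0).deriv]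

theorem arsinhGap_of_pos {y : ℝ} (hy : 0 < y) :
    arsinhGap y = log y - log (arsinh y) - 4 / 9 * log (1 + y ^ 2) - 5 / 18 * log (1 - y ^ 2) := by
  rw [arsinhGap, dslope_of_ne _ hy.ne', slope_def_field, arsinh_zero, sub_zero, sub_zero,
    log_div (arsinh_pos_iff.2 hy).ne' hy.ne']
  ring

theorem continuousOn_arsinhGap : ContinuousOn arsinhGap (Ioo (-1) 1) := by
  have hdslope : Continuous (dslope arsinh 0) :=
    continuousOn_univ.1 <| (continuousOn_dslope univ_mem).2
      ⟨continuous_arsinh.continuousOn, differentiable_arsinh 0⟩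
  intro y hy
  have hy2 : 0 < 1 - y ^ 2 := by nlinarith [hy.1, hy.2]
  have hplus : ContinuousAt (fun z : ℝ => log (1 + z ^ 2)) y :=
    (continuousAt_const.add (continuousAt_id.pow 2)).log (by positivity : 0 < 1 + y ^ 2).ne'
  have hminus : ContinuousAt (fun z : ℝ => log (1 - z ^ 2)) y :=
    (continuousAt_const.sub (continuousAt_id.pow 2)).log hy2.ne'
  exact ((hdslope.continuousAt.log (dslope_arsinh_zero_pos y).ne').neg.sub
    (hplus.const_mul _) |>.sub (hminus.const_mul _)).continuousWithinAt

theorem hasDerivAt_arsinhGap {y : ℝ} (h0 : 0 < y) (h1 : y < 1) :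
    HasDerivAt arsinhGap (arsinhGapDeriv y) y := by
  have hA : 0 < arsinh y := arsinh_pos_iff.2 h0
  have hplus : 0 < 1 + y ^ 2 := by positivity
  have hminus : 0 < 1 - y ^ 2 := by nlinarith
  have hy4 : 1 - y ^ 4 ≠ 0 := by nlinarith
  have hexplicit := (((hasDerivAt_log h0.ne').sub ((hasDerivAt_arsinh y).log hA.ne')).sub
    ((((hasDerivAt_pow 2 y).const_add 1).log hplus.ne').const_mul (4 / 9))).sub
    ((((hasDerivAt_pow 2 y).const_sub 1).log hminus.ne').const_mul (5 / 18))
  refine (hexplicit.congr_of_eventuallyEq ?_).congr_deriv ?_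
  · filter_upwards [Ioi_mem_nhds h0] with z hz using arsinhGap_of_pos hz
  · rw [arsinhGapDeriv]
    field_simp
    ring

theorem arsinhGapDeriv_pos {y : ℝ} (h0 : 0 < y) (h1 : y < 1) : 0 < arsinhGapDeriv y := by
  set P := arsinh y * √(1 + y ^ 2) with hP
  have hP_ge : y + y ^ 3 / 3 - y ^ 5 / 4 ≤ P :=
    add_cube_div_three_sub_le_arsinh_mul_sqrt h0.le h1.le
  have hP_pos : 0 < P := mul_pos (arsinh_pos_iff.2 h0) (sqrt_pos.2 (by positivity))
  have hy2 : y ^ 2 < 1 := pow_lt_one₀ h0.le h1 two_ne_zero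
  have hy4 : 0 < 1 - y ^ 4 := by nlinarith
  have hEq : arsinhGapDeriv y =
      (P * (9 - 3 * y ^ 2 + 4 * y ^ 4) - 9 * y * (1 - y ^ 4)) / (9 * y * P * (1 - y ^ 4)) := by
    rw [arsinhGapDeriv, ← hP]
    field_simp
    ring
  rw [hEq]
  refine div_pos ?_ (by positivity)
  have hq : 0 < 9 - 3 * y ^ 2 + 4 * y ^ 4 := by nlinarith
  calc 0 < (y + y ^ 3 / 3 - y ^ 5 / 4) * (9 - 3 * y ^ 2 + 4 * y ^ 4) - 9 * y * (1 - y ^ 4) := by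
        nlinarith [pow_pos h0 5, pow_pos h0 7]
    _ ≤ P * (9 - 3 * y ^ 2 + 4 * y ^ 4) - 9 * y * (1 - y ^ 4) := by
        gcongr

theorem strictMonoOn_arsinhGap : StrictMonoOn arsinhGap (Ico 0 1) := by
  refine strictMonoOn_of_deriv_pos (convex_Ico 0 1)
    (continuousOn_arsinhGap.mono fun y hy => ⟨by linarith [hy.1], hy.2⟩) fun y hy => ?_
  rw [interior_Ico] at hy
  rw [(hasDerivAt_arsinhGap hy.1 hy.2).deriv]
  exact arsinhGapDeriv_pos hy.1 hy.2

theorem stmt6 (x : ℝ) (hx : x ∈ Set.Ioo (0 : ℝ) 1) :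
    Real.log (1 + x ^ 2) - Real.log (x / Real.arsinh x) +
      (5 / 9) * ((1 / 2) * Real.log (1 - x ^ 2) - Real.log (1 + x ^ 2)) < 0 := by
  have hgap : 0 < arsinhGap x := arsinhGap_zero ▸
    strictMonoOn_arsinhGap ⟨le_rfl, zero_lt_one⟩ ⟨hx.1.le, hx.2⟩ hx.1
  rw [arsinhGap_of_pos hx.1] at hgap
  rw [log_div hx.1.ne' (arsinh_pos_iff.2 hx.1).ne']
  linarith
end

section
/- For all x ∈ (0,1), x(1+x²) - (1-x²)·sqrt(1+x²)·arsinh(x) > 0. -/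
/-! Since `arsinh x < x` for `x > 0`, it suffices that `(1 - x²) √(1 + x²) < 1 + x²`, which holds
because `1 - x² < 1 ≤ √(1 + x²) ≤ 1 + x²`. -/

open Real

theorem Real.arsinh_lt_self {x : ℝ} (hx : 0 < x) : arsinh x < x := by
  simpa using arsinh_lt_arsinh.mpr (self_lt_sinh_iff.mpr hx)

theorem one_sub_sq_mul_sqrt_one_add_sq_lt {x : ℝ} (hx : x ≠ 0) :
    (1 - x ^ 2) * √(1 + x ^ 2) < 1 + x ^ 2 := by
  have hx2 : 0 < x ^ 2 := by positivity
  have hs1 : 1 ≤ √(1 + x ^ 2) := one_le_sqrt.mpr (by linarith)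
  have hs : √(1 + x ^ 2) ≤ 1 + x ^ 2 := sqrt_le_self_iff.mpr (Or.inr (by linarith))
  nlinarith

theorem stmt8 (x : ℝ) (hx : x ∈ Set.Ioo (0 : ℝ) 1) :
    0 < x * (1 + x ^ 2) - (1 - x ^ 2) * Real.sqrt (1 + x ^ 2) * Real.arsinh x := by
  obtain ⟨hx0, hx1⟩ := hx
  have hfactor : 0 ≤ (1 - x ^ 2) * √(1 + x ^ 2) := by
    have : 0 ≤ 1 - x ^ 2 := by nlinarith
    positivity
  rw [sub_pos]
  calc (1 - x ^ 2) * √(1 + x ^ 2) * arsinh x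
      ≤ (1 - x ^ 2) * √(1 + x ^ 2) * x := by gcongr; exact (arsinh_lt_self hx0).le
    _ < (1 + x ^ 2) * x := by gcongr; exact one_sub_sq_mul_sqrt_one_add_sq_lt hx0.ne'
    _ = x * (1 + x ^ 2) := mul_comm _ _
end

section
/- The ratio [3 - cosh(2t)]·[sinh(2t) - 2t] / (8t·sinh²t) is strictly decreasing in t on (0, ∞). -/
/-!
Write `s = sinh t`, `c = cosh t`. By the double-angle formulas the ratio is
`((s c - t) / (t s²) - (sinh (2t) / (2t) - 1)) / 2`. The term `sinh x / x` increases because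
`sinh x < x cosh x`. The derivative of `(s c - t) / (t s²)` has the sign of `2 t² c - s² c - t s`,
which is negative: adding the bounds `s > t + t³/6` and `s > (t - t³/3) c` (i.e.
`tanh t > t - t³/3`) makes the quartic terms cancel, leaving `c t⁶ / 36 > 0`.
Each elementary bound follows from a function vanishing at `0` with positive derivative.
-/

open Real Set

lemma pos_of_hasDerivAt_of_pos {f f' : ℝ → ℝ} (hf : ∀ x, HasDerivAt f (f' x) x)
    (hf' : ∀ x, 0 < x → 0 < f' x) (h0 : f 0 = 0) {x : ℝ} (hx : 0 < x) : 0 < f x := by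
  have hmono : StrictMonoOn f (Ici 0) :=
    strictMonoOn_of_hasDerivWithinAt_pos (convex_Ici 0)
      (fun y _ => (hf y).continuousAt.continuousWithinAt)
      (fun y _ => (hf y).hasDerivWithinAt) (fun y hy => hf' y (by rwa [interior_Ici] at hy))
  simpa [h0] using hmono self_mem_Ici hx.le hx

lemma sinh_lt_mul_cosh {x : ℝ} (hx : 0 < x) : sinh x < x * cosh x := by
  have := pos_of_hasDerivAt_of_pos (f := fun x => x * cosh x - sinh x)
    (fun y => (((hasDerivAt_id' y).mul (hasDerivAt_cosh y)).sub (hasDerivAt_sinh y)).congr_deriv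
      (by ring))
    (fun y hy => mul_pos hy (sinh_pos_iff.mpr hy)) (by simp) hx
  linarith

lemma one_add_sq_div_two_lt_cosh {x : ℝ} (hx : 0 < x) : 1 + x ^ 2 / 2 < cosh x := by
  have hhalf : x / 2 < sinh (x / 2) := self_lt_sinh_iff.mpr (by linarith)
  have hcosh : cosh x = 1 + 2 * sinh (x / 2) ^ 2 := by
    have h := cosh_two_mul (x / 2)
    rw [mul_div_cancel₀ x two_ne_zero] at h
    rw [h, cosh_sq]; ring
  nlinarith

lemma add_pow_three_div_six_lt_sinh {x : ℝ} (hx : 0 < x) : x + x ^ 3 / 6 < sinh x := by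
  have := pos_of_hasDerivAt_of_pos (f := fun x => sinh x - x - x ^ 3 / 6)
    (f' := fun x => cosh x - 1 - x ^ 2 / 2)
    (fun y => (((hasDerivAt_sinh y).sub (hasDerivAt_id' y)).sub
      ((hasDerivAt_pow 3 y).div_const 6)).congr_deriv (by norm_num; ring))
    (fun y hy => by linarith [one_add_sq_div_two_lt_cosh hy]) (by simp) hx
  linarith

lemma sub_pow_three_div_three_mul_cosh_lt_sinh {x : ℝ} (hx : 0 < x) :
    (x - x ^ 3 / 3) * cosh x < sinh x := by
  have := pos_of_hasDerivAt_of_pos (f := fun x => sinh x - (x - x ^ 3 / 3) * cosh x)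
    (f' := fun x => x * (x * cosh x - sinh x) + x ^ 3 / 3 * sinh x)
    (fun y => ((hasDerivAt_sinh y).sub (((hasDerivAt_id' y).sub
      ((hasDerivAt_pow 3 y).div_const 3)).mul (hasDerivAt_cosh y))).congr_deriv
      (by norm_num; ring))
    (fun y hy => by
      have := sinh_lt_mul_cosh hy
      have := sinh_pos_iff.mpr hy
      positivity) (by simp) hx
  linarith

lemma two_mul_sq_mul_cosh_lt {x : ℝ} (hx : 0 < x) :
    2 * x ^ 2 * cosh x < sinh x ^ 2 * cosh x + x * sinh x := by
  have hsinh := add_pow_three_div_six_lt_sinh hx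
  have htanh := sub_pow_three_div_three_mul_cosh_lt_sinh hx
  have hsq : (x + x ^ 3 / 6) ^ 2 < sinh x ^ 2 := by gcongr
  calc 2 * x ^ 2 * cosh x < 2 * x ^ 2 * cosh x + x ^ 6 / 36 * cosh x :=
        lt_add_of_pos_right _ (by positivity)
    _ = (x + x ^ 3 / 6) ^ 2 * cosh x + x * ((x - x ^ 3 / 3) * cosh x) := by ring
    _ < sinh x ^ 2 * cosh x + x * sinh x := by gcongr

lemma strictMonoOn_sinh_div_self : StrictMonoOn (fun x => sinh x / x) (Ioi 0) := by
  have hder : ∀ x ∈ Ioi (0 : ℝ), HasDerivAt (fun x => sinh x / x)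
      ((cosh x * x - sinh x * 1) / x ^ 2) x := fun x hx =>
    (hasDerivAt_sinh x).div (hasDerivAt_id' x) (ne_of_gt hx)
  refine strictMonoOn_of_hasDerivWithinAt_pos (convex_Ioi 0)
    (fun x hx => (hder x hx).continuousAt.continuousWithinAt)
    (fun x hx => (hder x (by rwa [interior_Ioi] at hx)).hasDerivWithinAt) fun x hx => ?_
  rw [interior_Ioi, mem_Ioi] at hx
  have := sinh_lt_mul_cosh hx
  exact div_pos (by linarith) (by positivity)

lemma strictAntiOn_sinh_mul_cosh_sub_self_div :
    StrictAntiOn (fun t => (sinh t * cosh t - t) / (t * sinh t ^ 2)) (Ioi 0) := by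
  have hder : ∀ t ∈ Ioi (0 : ℝ), HasDerivAt (fun t => (sinh t * cosh t - t) / (t * sinh t ^ 2))
      (sinh t * (2 * t ^ 2 * cosh t - (sinh t ^ 2 * cosh t + t * sinh t)) / (t * sinh t ^ 2) ^ 2)
      t := by
    intro t ht
    rw [mem_Ioi] at ht
    have hs := sinh_pos_iff.mpr ht
    refine (((hasDerivAt_sinh t).mul (hasDerivAt_cosh t)).sub (hasDerivAt_id' t)).div
      ((hasDerivAt_id' t).mul ((hasDerivAt_sinh t).pow 2))
      (by simp only [Pi.mul_apply, Pi.pow_apply]; positivity) |>.congr_deriv ?_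
    simp only [Pi.mul_apply, Pi.sub_apply, Pi.pow_apply]
    congr 1
    linear_combination (-(t * sinh t ^ 2)) * cosh_sq t
  refine strictAntiOn_of_hasDerivWithinAt_neg (convex_Ioi 0)
    (fun t ht => (hder t ht).continuousAt.continuousWithinAt)
    (fun t ht => (hder t (by rwa [interior_Ioi] at ht)).hasDerivWithinAt) fun t ht => ?_
  rw [interior_Ioi, mem_Ioi] at ht
  have hs := sinh_pos_iff.mpr ht
  have := two_mul_sq_mul_cosh_lt ht
  exact div_neg_of_neg_of_pos (mul_neg_of_pos_of_neg hs (by linarith)) (by positivity)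

lemma three_sub_cosh_two_mul_mul_div_eq {t : ℝ} (ht : 0 < t) :
    (3 - cosh (2 * t)) * (sinh (2 * t) - 2 * t) / (8 * t * sinh t ^ 2) =
      ((sinh t * cosh t - t) / (t * sinh t ^ 2) - (sinh (2 * t) / (2 * t) - 1)) / 2 := by
  rw [cosh_two_mul, sinh_two_mul, cosh_sq]
  field_simp
  ring

theorem stmt16 :
    StrictAntiOn
      (fun t : ℝ => (3 - Real.cosh (2 * t)) * (Real.sinh (2 * t) - 2 * t) /
        (8 * t * Real.sinh t ^ 2))
      (Set.Ioi 0) := by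
  intro a (ha : 0 < a) b (hb : 0 < b) hab
  have hA := strictAntiOn_sinh_mul_cosh_sub_self_div ha hb hab
  have hB : sinh (2 * a) / (2 * a) < sinh (2 * b) / (2 * b) :=
    strictMonoOn_sinh_div_self (mem_Ioi.mpr (by positivity)) (mem_Ioi.mpr (by positivity))
      (by linarith)
  simp only [three_sub_cosh_two_mul_mul_div_eq ha, three_sub_cosh_two_mul_mul_div_eq hb] at hA ⊢
  linarith
end
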